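/- arXiv:2203.07552 — 2 statements merged into one kernel-verified Lean document; each statement's English description precedes it below -/
import Mathlib

section
/- Let β : [a,b] → ℝ² be a continuous curve whose x-coordinate is monotone and whose y-coordinate is monotone (each either nondecreasing or nonincreasing). For K ∈ ℕ and v ∈ ℝ², the number of cells of the grid {(1/K)([0,1)² + p + v) : p ∈ ℤ²} intersected by the image of β is at most K·(c + d) + 4, where c = |x(b) − x(a)| and d = |y(b) − y(a)|. -/
open Set

noncomputable section

/-- Arc length of a curve `β` over `[a,b]` (total variation). -/
def curveLength (β : ℝ → EuclideanSpace ℝ (Fin 2)) (a b : ℝ) : ℝ :=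
  (eVariationOn β (Icc a b)).toReal

/-- The half-open square grid cell of side `1/K`, shifted by `v/K`, indexed by `p ∈ ℤ²`. -/
def gridCell (K : ℕ) (v : EuclideanSpace ℝ (Fin 2)) (p : ℤ × ℤ) :
    Set (EuclideanSpace ℝ (Fin 2)) :=
  {q | q 0 ∈ Ico (((p.1 : ℝ) + v 0) / K) (((p.1 : ℝ) + v 0 + 1) / K) ∧
       q 1 ∈ Ico (((p.2 : ℝ) + v 1) / K) (((p.2 : ℝ) + v 1 + 1) / K)}

/-- The set of grid cells intersected by the image of the curve `β` on `[a,b]`. -/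
def hitCells (K : ℕ) (v : EuclideanSpace ℝ (Fin 2)) (β : ℝ → EuclideanSpace ℝ (Fin 2))
    (a b : ℝ) : Set (ℤ × ℤ) :=
  {p | (gridCell K v p ∩ β '' Icc a b).Nonempty}

/-- Step lemma: ordering of cell indices forces ordering of times, with a sign
depending on whether the coordinate is nondecreasing or nonincreasing. -/
lemma coord_step (f : ℝ → ℝ) (a b : ℝ) (K : ℕ) (hK : 0 < K) (w : ℝ)
    (hm : MonotoneOn f (Icc a b) ∨ AntitoneOn f (Icc a b)) :
    ∃ ε : ℤ, (ε = 1 ∨ ε = -1) ∧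
      ∀ ⦃t t' : ℝ⦄, t ∈ Icc a b → t' ∈ Icc a b → ∀ ⦃p q : ℤ⦄,
        f t ∈ Ico (((p : ℝ) + w) / K) (((p : ℝ) + w + 1) / K) →
        f t' ∈ Ico (((q : ℝ) + w) / K) (((q : ℝ) + w + 1) / K) →
        ε * p < ε * q → t < t' := by
  have hK' : (0 : ℝ) < K := by exact_mod_cast hK
  rcases hm with hm | hm
  · refine ⟨1, Or.inl rfl, fun t t' ht ht' p q hp hq hlt => ?_⟩
    have hpq : (p : ℝ) + 1 ≤ q := by exact_mod_cast (by omega : p + 1 ≤ q)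
    have h1 : ((p : ℝ) + w + 1) / K ≤ ((q : ℝ) + w) / K :=
      div_le_div_of_nonneg_right (by linarith) hK'.le
    have hf : f t < f t' := lt_of_lt_of_le hp.2 (h1.trans hq.1)
    by_contra h
    exact absurd (hm ht' ht (not_lt.mp h)) (not_le.mpr hf)
  · refine ⟨-1, Or.inr rfl, fun t t' ht ht' p q hp hq hlt => ?_⟩
    have hpq : (q : ℝ) + 1 ≤ p := by exact_mod_cast (by omega : q + 1 ≤ p)
    have h1 : ((q : ℝ) + w + 1) / K ≤ ((p : ℝ) + w) / K :=
      div_le_div_of_nonneg_right (by linarith) hK'.le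
    have hf : f t' < f t := lt_of_lt_of_le hq.2 (h1.trans hp.1)
    by_contra h
    exact absurd (hm ht' ht (not_lt.mp h)) (not_le.mpr hf)

/-- Range lemma: the index of a hit column lies in an explicit interval. -/
lemma coord_range (f : ℝ → ℝ) (a b : ℝ) (hab : a ≤ b) (K : ℕ) (hK : 0 < K) (w : ℝ)
    (hm : MonotoneOn f (Icc a b) ∨ AntitoneOn f (Icc a b)) :
    ∀ ⦃t : ℝ⦄, t ∈ Icc a b → ∀ ⦃p : ℤ⦄,
      f t ∈ Ico (((p : ℝ) + w) / K) (((p : ℝ) + w + 1) / K) →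
      (p : ℝ) ∈ Icc (K * min (f a) (f b) - w - 1) (K * max (f a) (f b) - w) := by
  intro t ht p hp
  have hK' : (0 : ℝ) < K := by exact_mod_cast hK
  have ha : a ∈ Icc a b := ⟨le_refl a, hab⟩
  have hb : b ∈ Icc a b := ⟨hab, le_refl b⟩
  have hlo : min (f a) (f b) ≤ f t := by
    rcases hm with hm | hm
    · exact (min_le_left _ _).trans (hm ha ht ht.1)
    · exact (min_le_right _ _).trans (hm ht hb ht.2)
  have hhi : f t ≤ max (f a) (f b) := by
    rcases hm with hm | hm
    · exact (hm ht hb ht.2).trans (le_max_right _ _)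
    · exact (hm ha ht ht.1).trans (le_max_left _ _)
  constructor
  · have h1 : min (f a) (f b) < ((p : ℝ) + w + 1) / K := lt_of_le_of_lt hlo hp.2
    have h2 : K * min (f a) (f b) < (p : ℝ) + w + 1 := by
      rw [mul_comm]
      exact (lt_div_iff₀ hK').mp h1
    linarith
  · have h1 : ((p : ℝ) + w) / K ≤ max (f a) (f b) := hp.1.trans hhi
    have h2 : (p : ℝ) + w ≤ K * max (f a) (f b) := by
      rw [mul_comm]
      exact (div_le_iff₀ hK').mp h1
    linarith

/-- A continuous planar curve with both coordinates monotone meets at most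
`K(c+d) + 4` cells of the grid of half-open squares of side `1/K` (arbitrarily
translated), where `c` and `d` are the total variations in `x` and `y`. -/
theorem monotone_curve_grid_bound (a b : ℝ) (hab : a ≤ b)
    (β : ℝ → EuclideanSpace ℝ (Fin 2)) (hcont : ContinuousOn β (Icc a b))
    (hx : MonotoneOn (fun s => β s 0) (Icc a b) ∨ AntitoneOn (fun s => β s 0) (Icc a b))
    (hy : MonotoneOn (fun s => β s 1) (Icc a b) ∨ AntitoneOn (fun s => β s 1) (Icc a b))
    (K : ℕ) (hK : 0 < K) (v : EuclideanSpace ℝ (Fin 2)) :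
    (hitCells K v β a b).Finite ∧
      ((hitCells K v β a b).ncard : ℝ) ≤
        K * (|β b 0 - β a 0| + |β b 1 - β a 1|) + 4 := by
  obtain ⟨ε₁, hε₁, hstep₁⟩ := coord_step (fun s => β s 0) a b K hK (v 0) hx
  obtain ⟨ε₂, hε₂, hstep₂⟩ := coord_step (fun s => β s 1) a b K hK (v 1) hy
  set H := hitCells K v β a b with hH
  set φ : ℤ × ℤ → ℤ := fun p => ε₁ * p.1 + ε₂ * p.2 with hφ
  -- extract a witness time for each hit cell
  have hwit : ∀ p ∈ H, ∃ t ∈ Icc a b,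
      β t 0 ∈ Ico (((p.1 : ℝ) + v 0) / K) (((p.1 : ℝ) + v 0 + 1) / K) ∧
      β t 1 ∈ Ico (((p.2 : ℝ) + v 1) / K) (((p.2 : ℝ) + v 1 + 1) / K) := by
    rintro p ⟨z, hz, t, ht, rfl⟩
    exact ⟨t, ht, hz.1, hz.2⟩
  -- injectivity of φ on H
  have hinj : Set.InjOn φ H := by
    intro p hp q hq hpq
    obtain ⟨t, ht, hp1, hp2⟩ := hwit p hp
    obtain ⟨t', ht', hq1, hq2⟩ := hwit q hq
    simp only [hφ] at hpq
    have hε₁ne : ε₁ ≠ 0 := by rcases hε₁ with rfl | rfl <;> norm_num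
    have hε₂ne : ε₂ ≠ 0 := by rcases hε₂ with rfl | rfl <;> norm_num
    have h1 : p.1 = q.1 := by
      by_contra hne
      have hne' : ε₁ * p.1 ≠ ε₁ * q.1 := fun h => hne (mul_left_cancel₀ hε₁ne h)
      rcases lt_or_gt_of_ne hne' with hlt | hlt
      · have htt : t < t' := hstep₁ ht ht' hp1 hq1 hlt
        have hlt2 : ε₂ * q.2 < ε₂ * p.2 := by linarith
        have : t' < t := hstep₂ ht' ht hq2 hp2 hlt2
        linarith
      · have htt : t' < t := hstep₁ ht' ht hq1 hp1 hlt
        have hlt2 : ε₂ * p.2 < ε₂ * q.2 := by linarith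
        have : t < t' := hstep₂ ht ht' hp2 hq2 hlt2
        linarith
    have h2 : p.2 = q.2 := by
      rw [h1] at hpq
      have h3 : ε₂ * p.2 = ε₂ * q.2 := by linarith
      exact mul_left_cancel₀ hε₂ne h3
    exact Prod.ext h1 h2
  -- range bounds
  set c := |β b 0 - β a 0| with hc
  set d := |β b 1 - β a 1| with hd
  set lo₁ := (K : ℝ) * min (β a 0) (β b 0) - v 0 - 1 with hlo₁
  set hi₁ := (K : ℝ) * max (β a 0) (β b 0) - v 0 with hhi₁
  set lo₂ := (K : ℝ) * min (β a 1) (β b 1) - v 1 - 1 with hlo₂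
  set hi₂ := (K : ℝ) * max (β a 1) (β b 1) - v 1 with hhi₂
  have hlen₁ : hi₁ - lo₁ = K * c + 1 := by
    simp only [hlo₁, hhi₁, hc]
    rw [← max_sub_min_eq_abs]
    ring
  have hlen₂ : hi₂ - lo₂ = K * d + 1 := by
    simp only [hlo₂, hhi₂, hd]
    rw [← max_sub_min_eq_abs]
    ring
  set M : ℝ := (ε₁ : ℝ) * ((lo₁ + hi₁) / 2) + (ε₂ : ℝ) * ((lo₂ + hi₂) / 2) with hM
  set R : ℝ := (hi₁ - lo₁) / 2 + (hi₂ - lo₂) / 2 with hR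
  have hrange : ∀ p ∈ H, ((φ p : ℤ) : ℝ) ∈ Icc (M - R) (M + R) := by
    intro p hp
    obtain ⟨t, ht, hp1, hp2⟩ := hwit p hp
    have h1 : ((p.1 : ℤ) : ℝ) ∈ Icc lo₁ hi₁ :=
      coord_range (fun s => β s 0) a b hab K hK (v 0) hx ht hp1
    have h2 : ((p.2 : ℤ) : ℝ) ∈ Icc lo₂ hi₂ :=
      coord_range (fun s => β s 1) a b hab K hK (v 1) hy ht hp2
    have e1 : |(ε₁ : ℝ) * p.1 - (ε₁ : ℝ) * ((lo₁ + hi₁) / 2)| ≤ (hi₁ - lo₁) / 2 := by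
      rcases hε₁ with rfl | rfl <;>
        · simp only [Int.cast_one, Int.cast_neg, one_mul, neg_mul, neg_sub_neg] <;>
          rw [abs_sub_le_iff] <;> constructor <;> [skip; skip] <;> linarith [h1.1, h1.2]
    have e2 : |(ε₂ : ℝ) * p.2 - (ε₂ : ℝ) * ((lo₂ + hi₂) / 2)| ≤ (hi₂ - lo₂) / 2 := by
      rcases hε₂ with rfl | rfl <;>
        · simp only [Int.cast_one, Int.cast_neg, one_mul, neg_mul, neg_sub_neg] <;>
          rw [abs_sub_le_iff] <;> constructor <;> [skip; skip] <;> linarith [h2.1, h2.2]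
    have : |((φ p : ℤ) : ℝ) - M| ≤ R := by
      have : ((φ p : ℤ) : ℝ) = (ε₁ : ℝ) * p.1 + (ε₂ : ℝ) * p.2 := by
        simp [hφ]
      rw [this, hM, hR]
      calc |(ε₁ : ℝ) * p.1 + (ε₂ : ℝ) * p.2 -
            ((ε₁ : ℝ) * ((lo₁ + hi₁) / 2) + (ε₂ : ℝ) * ((lo₂ + hi₂) / 2))|
          ≤ |(ε₁ : ℝ) * p.1 - (ε₁ : ℝ) * ((lo₁ + hi₁) / 2)| +
            |(ε₂ : ℝ) * p.2 - (ε₂ : ℝ) * ((lo₂ + hi₂) / 2)| := by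
            rw [show (ε₁ : ℝ) * p.1 + (ε₂ : ℝ) * p.2 -
              ((ε₁ : ℝ) * ((lo₁ + hi₁) / 2) + (ε₂ : ℝ) * ((lo₂ + hi₂) / 2)) =
              ((ε₁ : ℝ) * p.1 - (ε₁ : ℝ) * ((lo₁ + hi₁) / 2)) +
              ((ε₂ : ℝ) * p.2 - (ε₂ : ℝ) * ((lo₂ + hi₂) / 2)) by ring]
            exact abs_add_le _ _
        _ ≤ (hi₁ - lo₁) / 2 + (hi₂ - lo₂) / 2 := add_le_add e1 e2
    obtain ⟨hA, hB⟩ := abs_sub_le_iff.mp this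
    exact ⟨by linarith, by linarith⟩
  -- the image of H under φ is contained in an integer interval
  set n : ℤ := ⌈M - R⌉ with hn
  set m : ℤ := ⌊M + R⌋ with hm
  have hsub : φ '' H ⊆ Set.Icc n m := by
    rintro _ ⟨p, hp, rfl⟩
    obtain ⟨h1, h2⟩ := hrange p hp
    exact ⟨Int.ceil_le.mpr h1, Int.le_floor.mpr h2⟩
  have hfin : H.Finite := by
    apply Set.Finite.of_finite_image _ hinj
    exact (Set.finite_Icc n m).subset hsub
  refine ⟨hfin, ?_⟩
  have hcard : H.ncard ≤ (Set.Icc n m).ncard := by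
    rw [← Set.ncard_image_of_injOn hinj]
    exact Set.ncard_le_ncard hsub (Set.finite_Icc n m)
  have hIcc : (Set.Icc n m).ncard = (m + 1 - n).toNat := by
    rw [← Finset.coe_Icc, Set.ncard_coe_finset, Int.card_Icc]
  have hRnn : 0 ≤ R := by
    rw [hR, hlen₁, hlen₂]
    have : (0:ℝ) ≤ K * c := mul_nonneg (by positivity) (abs_nonneg _)
    have : (0:ℝ) ≤ K * d := mul_nonneg (by positivity) (abs_nonneg _)
    positivity
  have hcd : 0 ≤ (K:ℝ) * (c + d) := mul_nonneg (by positivity)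
    (add_nonneg (abs_nonneg _) (abs_nonneg _))
  have hfinal : ((m + 1 - n).toNat : ℝ) ≤ K * (c + d) + 4 := by
    rcases le_or_gt (m + 1 - n) 0 with h | h
    · rw [Int.toNat_of_nonpos h]
      push_cast
      linarith
    · have hcast : ((m + 1 - n).toNat : ℝ) = ((m : ℝ) + 1 - (n : ℝ)) := by
        have := Int.toNat_of_nonneg h.le
        exact_mod_cast congrArg (fun z : ℤ => (z : ℝ)) this
      rw [hcast]
      have h1 : (m : ℝ) ≤ M + R := Int.floor_le _
      have h2 : M - R ≤ (n : ℝ) := Int.le_ceil _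
      have h3 : (m : ℝ) + 1 - n ≤ 2 * R + 1 := by linarith
      have h4 : 2 * R + 1 = K * (c + d) + 3 := by
        rw [hR, hlen₁, hlen₂]; ring
      linarith
  calc ((H.ncard : ℝ)) ≤ ((Set.Icc n m).ncard : ℝ) := by exact_mod_cast hcard
    _ = ((m + 1 - n).toNat : ℝ) := by rw [hIcc]
    _ ≤ K * (c + d) + 4 := hfinal
end
end

section
/- If both the north pole and south pole lie on the boundary of a spherical cap C(w,t) with w = γ(φ_w, θ_w) and t ∈ [0,1), then t = 0, θ_w = π/2, and ∂C = γ({φ_w + π/2, φ_w + 3π/2} × [0,π]), i.e. the boundary is the union of the two meridians at angles φ_w ± π/2. -/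
open Real Set
open scoped RealInnerProductSpace

noncomputable section

/-- The unit sphere in ℝ³. -/
def S2 : Set (EuclideanSpace ℝ (Fin 3)) := Metric.sphere 0 1

/-- The standard spherical parametrization `γ(φ, θ)`. -/
def gammaMap (φ θ : ℝ) : EuclideanSpace ℝ (Fin 3) :=
  (WithLp.equiv 2 (Fin 3 → ℝ)).symm
    ![Real.cos φ * Real.sin θ, Real.sin φ * Real.sin θ, Real.cos θ]

/-- The boundary circle of the spherical cap `C(w, t)`. -/
def capBoundary (w : EuclideanSpace ℝ (Fin 3)) (t : ℝ) :
    Set (EuclideanSpace ℝ (Fin 3)) :=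
  {x ∈ S2 | ⟪x, w⟫ = t}

/-! In spherical coordinates `⟪γ(φ, θ), γ(φ', θ')⟫ = sin θ sin θ' cos (φ - φ') + cos θ cos θ'`.
At the two poles this gives `cos θ_w = t` and `-cos θ_w = t`, so `t = cos θ_w = 0`. A point
`γ(φ, θ)` then lies on the boundary iff `sin θ cos (φ - φ_w) = 0`: it is a pole, which lies on
every meridian, or `φ ≡ φ_w ± π/2` modulo `2π`. -/

lemma inner_gammaMap_gammaMap (φ θ φ' θ' : ℝ) :
    ⟪gammaMap φ θ, gammaMap φ' θ'⟫ = sin θ * sin θ' * cos (φ - φ') + cos θ * cos θ' := by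
  simp only [gammaMap, PiLp.inner_apply, Fin.sum_univ_three, WithLp.equiv_symm_apply]
  simp [cos_sub]
  ring

lemma gammaMap_mem_S2 (φ θ : ℝ) : gammaMap φ θ ∈ S2 := by
  rw [S2, mem_sphere_zero_iff_norm, ← pow_eq_one_iff_of_nonneg (norm_nonneg _) two_ne_zero,
    ← real_inner_self_eq_norm_sq, inner_gammaMap_gammaMap, sub_self, cos_zero]
  linear_combination sin_sq_add_cos_sq θ

lemma gammaMap_eq_of_coe_eq {φ φ' : ℝ} (h : (φ : Real.Angle) = φ') (θ : ℝ) :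
    gammaMap φ θ = gammaMap φ' θ := by
  have hcos := congrArg Real.Angle.cos h
  have hsin := congrArg Real.Angle.sin h
  simp only [Real.Angle.cos_coe, Real.Angle.sin_coe] at hcos hsin
  rw [gammaMap, gammaMap, hcos, hsin]

lemma gammaMap_eq_of_sin_eq_zero {θ : ℝ} (h : sin θ = 0) (φ φ' : ℝ) :
    gammaMap φ θ = gammaMap φ' θ := by
  simp [gammaMap, h]

lemma exists_gammaMap_eq_of_mem_S2 {x : EuclideanSpace ℝ (Fin 3)} (hx : x ∈ S2) :
    ∃ φ, ∃ θ ∈ Icc 0 π, gammaMap φ θ = x := by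
  have hnorm : x 0 ^ 2 + x 1 ^ 2 + x 2 ^ 2 = 1 := by
    have := EuclideanSpace.real_norm_sq_eq x
    rw [show ‖x‖ = 1 by simpa [S2] using hx, Fin.sum_univ_three] at this
    linarith
  set z : ℂ := ⟨x 0, x 1⟩
  have hz : ‖z‖ = sin (arccos (x 2)) := by
    rw [sin_arccos, Complex.norm_eq_sqrt_sq_add_sq]
    congr 1
    linarith
  refine ⟨Complex.arg z, arccos (x 2), ⟨arccos_nonneg _, arccos_le_pi _⟩, ?_⟩
  have h2 : cos (arccos (x 2)) = x 2 := cos_arccos (by nlinarith) (by nlinarith)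
  ext i
  fin_cases i
  · simp [gammaMap, ← hz, mul_comm (cos _), z]
  · simp [gammaMap, ← hz, mul_comm (sin _), z]
  · simp [gammaMap, h2]

lemma capBoundary_gammaMap_pi_div_two_zero (φ : ℝ) :
    capBoundary (gammaMap φ (π / 2)) 0 =
      {x | ∃ θ ∈ Icc (0 : ℝ) π, x = gammaMap (φ + π / 2) θ ∨ x = gammaMap (φ + 3 * π / 2) θ} := by
  ext x
  constructor
  · rintro ⟨hx, hperp⟩
    obtain ⟨ψ, θ, hθ, rfl⟩ := exists_gammaMap_eq_of_mem_S2 hx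
    rw [inner_gammaMap_gammaMap, sin_pi_div_two, cos_pi_div_two] at hperp
    simp only [mul_one, mul_zero, add_zero, mul_eq_zero] at hperp
    refine ⟨θ, hθ, ?_⟩
    rcases hperp with hsin | hcos
    · exact .inl (gammaMap_eq_of_sin_eq_zero hsin _ _)
    have hψ : (ψ : Real.Angle) = φ + (ψ - φ : ℝ) := by rw [← Real.Angle.coe_add, add_sub_cancel]
    rw [← Real.Angle.cos_coe, Real.Angle.cos_eq_zero_iff] at hcos
    rcases hcos with h | h
    · left
      exact gammaMap_eq_of_coe_eq (by rw [hψ, h, Real.Angle.coe_add]) θ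
    · right
      refine gammaMap_eq_of_coe_eq ?_ θ
      rw [hψ, h, ← Real.Angle.coe_add, ← sub_eq_zero, ← Real.Angle.coe_sub,
        show φ + -π / 2 - (φ + 3 * π / 2) = -(2 * π) by ring, Real.Angle.coe_neg,
        Real.Angle.coe_two_pi, neg_zero]
  · have hcos : cos (3 * π / 2) = 0 := Real.cos_eq_zero_iff.mpr ⟨1, by ring⟩
    rintro ⟨θ, -, rfl | rfl⟩ <;> refine ⟨gammaMap_mem_S2 _ _, ?_⟩ <;>
      simp [inner_gammaMap_gammaMap, hcos]

theorem both_poles_on_boundary_general (φw θw t : ℝ)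
    (hθw : θw ∈ Ioo 0 π)
    (hnp : gammaMap 0 0 ∈ capBoundary (gammaMap φw θw) t)
    (hsp : gammaMap 0 π ∈ capBoundary (gammaMap φw θw) t) :
    t = 0 ∧ θw = π / 2 ∧
      capBoundary (gammaMap φw θw) t =
        {x | ∃ θ ∈ Icc (0 : ℝ) π,
          x = gammaMap (φw + π / 2) θ ∨ x = gammaMap (φw + 3 * π / 2) θ} := by
  have hnorth : cos θw = t := by simpa [inner_gammaMap_gammaMap] using hnp.2
  have hsouth : -cos θw = t := by simpa [inner_gammaMap_gammaMap] using hsp.2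
  have ht : t = 0 := by linarith
  have hθ : θw = π / 2 :=
    injOn_cos (Ioo_subset_Icc_self hθw) ⟨by positivity, by linarith [pi_pos]⟩
      (by rw [cos_pi_div_two]; linarith)
  subst ht hθ
  exact ⟨rfl, rfl, capBoundary_gammaMap_pi_div_two_zero φw⟩

/-- If both poles lie on the boundary of the cap `C(γ(φ_w, θ_w), t)` with `t ∈ [0,1)`
and `θ_w ∈ (0, π)`, then `t = 0`, `θ_w = π/2`, and the boundary is the union of the two
meridians at angles `φ_w + π/2` and `φ_w + 3π/2`. -/
theorem both_poles_on_boundary (φw θw t : ℝ)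
    (ht : t ∈ Ico (0 : ℝ) 1) (hθw : θw ∈ Ioo 0 π)
    (hnp : gammaMap 0 0 ∈ capBoundary (gammaMap φw θw) t)
    (hsp : gammaMap 0 π ∈ capBoundary (gammaMap φw θw) t) :
    t = 0 ∧ θw = π / 2 ∧
      capBoundary (gammaMap φw θw) t =
        {x | ∃ θ ∈ Icc (0 : ℝ) π,
          x = gammaMap (φw + π / 2) θ ∨ x = gammaMap (φw + 3 * π / 2) θ} :=
  both_poles_on_boundary_general φw θw t hθw hnp hsp
end
end
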